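/- Let (Y,d) be a bounded metric space and let (Y_ω, d_ω) be the constant ultralimit of Y with respect to a non-principal ultrafilter ω on an index set I. Suppose every geodesic triangle in Y of perimeter < 2D satisfies the CAT(κ) comparison inequality and Y is uniquely geodesic with geodesics varying so that limits of geodesics are geodesics. If Y is a closed ball of radius r ≤ (1-ε)D_κ/2 in a CAT(κ) space, then (Y_ω, d_ω) is a CAT(κ) space of radius at most r, and every geodesic in Y_ω is a limit of geodesics in Y. -/

import Mathlib

open Real

/-- A curve `γ : ℝ → X` is a geodesic (on `[0,1]`). -/
def IsGeodesic {X : Type*} [MetricSpace X] (γ : ℝ → X) : Prop :=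
  ∃ L : ℝ, 0 ≤ L ∧ ∀ s ∈ Set.Icc (0 : ℝ) 1, ∀ t ∈ Set.Icc (0 : ℝ) 1,
    dist (γ s) (γ t) = L * |s - t|

/-- The one-point comparison inequality with the model space of curvature `κ`,
for a point at parameter `t` on a geodesic from `x` to `y`, compared from `z`.
Here `dzx, dzy, dxy, dzt` denote the distances `d(z,x), d(z,y), d(x,y), d(z,γ(t))`. -/
def catIneq (κ dzx dzy dxy dzt t : ℝ) : Prop :=
  (0 < κ →
    Real.sin ((1 - t) * (Real.sqrt κ * dxy)) * Real.cos (Real.sqrt κ * dzx)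
      + Real.sin (t * (Real.sqrt κ * dxy)) * Real.cos (Real.sqrt κ * dzy)
      ≤ Real.cos (Real.sqrt κ * dzt) * Real.sin (Real.sqrt κ * dxy)) ∧
  (κ = 0 →
    dzt ^ 2 ≤ (1 - t) * dzx ^ 2 + t * dzy ^ 2 - t * (1 - t) * dxy ^ 2) ∧
  (κ < 0 →
    Real.cosh (Real.sqrt (-κ) * dzt) * Real.sinh (Real.sqrt (-κ) * dxy)
      ≤ Real.sinh ((1 - t) * (Real.sqrt (-κ) * dxy)) * Real.cosh (Real.sqrt (-κ) * dzx)
        + Real.sinh (t * (Real.sqrt (-κ) * dxy)) * Real.cosh (Real.sqrt (-κ) * dzy))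

/-- A metric space is CAT(κ) iff it is `D_κ`-geodesic and every geodesic triangle
of perimeter `< 2 D_κ` satisfies the one-point comparison inequality with the model
space of curvature `κ` (here `D_κ = π/√κ` for `κ > 0`, and the perimeter restriction
is vacuous for `κ ≤ 0`). -/
def IsCAT (κ : ℝ) (X : Type*) [MetricSpace X] : Prop :=
  (∀ x y : X, (0 < κ → dist x y < π / Real.sqrt κ) →
    ∃ γ : ℝ → X, IsGeodesic γ ∧ γ 0 = x ∧ γ 1 = y) ∧
  (∀ (x y z : X) (γ : ℝ → X), IsGeodesic γ → γ 0 = x → γ 1 = y →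
    (0 < κ → dist x y + dist y z + dist z x < 2 * (π / Real.sqrt κ)) →
    ∀ t ∈ Set.Icc (0 : ℝ) 1,
      catIneq κ (dist z x) (dist z y) (dist x y) (dist z (γ t)) t)

/-!
Balls of radius `< D_κ / 2` in a CAT(κ) space are convex, so the endpoints `γ 0 i`, `γ 1 i` of a
geodesic `γ` of the ultralimit are joined by geodesics `g i` inside the ball, and the comparison
inequality, a closed condition, passes to ω-limits. For `z = γ t` the limit comparison triangle is
degenerate: `z` lies at distances `L t` and `L (1 - t)` from the endpoints, so the model inequality
forces `z` to coincide with the limit of the `g i t`. Hence every geodesic of the ultralimit is a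
limit geodesic, and it inherits the comparison inequality from the `g i`.
-/

open Filter Topology Set

lemma isClosed_setOf_catIneq (κ t : ℝ) :
    IsClosed {p : ℝ × ℝ × ℝ × ℝ | catIneq κ p.1 p.2.1 p.2.2.1 p.2.2.2 t} := by
  simp only [catIneq, ofPred_and]
  refine .inter ?_ (.inter ?_ ?_) <;>
    exact isClosed_imp isOpen_const (isClosed_le (by fun_prop) (by fun_prop))

lemma eq_zero_of_catIneq_degenerate_of_pos {κ L d t : ℝ} (hκ : 0 < κ) (hd : 0 ≤ d)
    (hdL : d ≤ 2 * L) (hLD : L < π / √κ) (h : catIneq κ (L * t) (L * (1 - t)) L d t) :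
    d = 0 := by
  have hs : 0 < √κ := Real.sqrt_pos.2 hκ
  have hsLπ : √κ * L < π := by rwa [lt_div_iff₀ hs, mul_comm] at hLD
  rcases (hd.trans hdL).eq_or_lt with hL | hL
  · linarith
  replace hL : 0 < L := by linarith
  have hsin : 0 < sin (√κ * L) := sin_pos_of_pos_of_lt_pi (by positivity) hsLπ
  have h1 := h.1 hκ
  have hsum : sin ((1 - t) * (√κ * L)) * cos (√κ * (L * t))
      + sin (t * (√κ * L)) * cos (√κ * (L * (1 - t))) = sin (√κ * L) := by
    rw [show √κ * L = (1 - t) * (√κ * L) + t * (√κ * L) by ring, sin_add]; ring_nf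
  have hcos : cos (√κ * d) = 1 :=
    le_antisymm (cos_le_one _) (le_of_mul_le_mul_right (by linarith) hsin)
  rw [cos_eq_one_iff_of_lt_of_lt (by nlinarith [pi_pos]) (by nlinarith)] at hcos
  exact (mul_eq_zero.1 hcos).resolve_left hs.ne'

lemma eq_zero_of_catIneq_degenerate_of_neg {κ L d t : ℝ} (hκ : κ < 0) (hd : 0 ≤ d)
    (hdL : d ≤ 2 * L) (h : catIneq κ (L * t) (L * (1 - t)) L d t) : d = 0 := by
  have hc : 0 < √(-κ) := Real.sqrt_pos.2 (neg_pos.2 hκ)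
  rcases (hd.trans hdL).eq_or_lt with hL | hL
  · linarith
  replace hL : 0 < L := by linarith
  have hsinh : 0 < sinh (√(-κ) * L) := sinh_pos_iff.2 (by positivity)
  have h3 := h.2.2 hκ
  have hsum : sinh ((1 - t) * (√(-κ) * L)) * cosh (√(-κ) * (L * t))
      + sinh (t * (√(-κ) * L)) * cosh (√(-κ) * (L * (1 - t))) = sinh (√(-κ) * L) := by
    rw [show √(-κ) * L = (1 - t) * (√(-κ) * L) + t * (√(-κ) * L) by ring, sinh_add]; ring_nf
  have hcosh : ¬ 1 < cosh (√(-κ) * d) := fun h1 => by nlinarith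
  rw [one_lt_cosh, not_ne_iff] at hcosh
  exact (mul_eq_zero.1 hcosh).resolve_left hc.ne'

lemma eq_zero_of_catIneq_degenerate {κ L d t : ℝ} (hd : 0 ≤ d) (hdL : d ≤ 2 * L)
    (hLD : 0 < κ → L < π / √κ) (h : catIneq κ (L * t) (L * (1 - t)) L d t) : d = 0 := by
  rcases lt_trichotomy κ 0 with hκ | rfl | hκ
  · exact eq_zero_of_catIneq_degenerate_of_neg hκ hd hdL h
  · nlinarith [h.2.1 rfl]
  · exact eq_zero_of_catIneq_degenerate_of_pos hκ hd hdL (hLD hκ) h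

lemma le_of_catIneq_of_neg {κ r b₁ b₂ dxy dzt t : ℝ} (hκ : κ < 0) (ht : t ∈ Icc (0 : ℝ) 1)
    (hb₁ : 0 ≤ b₁) (hb₁r : b₁ ≤ r) (hb₂ : 0 ≤ b₂) (hb₂r : b₂ ≤ r) (hdxy : 0 < dxy)
    (hdzt : 0 ≤ dzt) (h : catIneq κ b₁ b₂ dxy dzt t) : dzt ≤ r := by
  have hc : 0 < √(-κ) := Real.sqrt_pos.2 (neg_pos.2 hκ)
  have cosh_le {x y : ℝ} (hx : 0 ≤ x) (hy : 0 ≤ y) :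
      cosh (√(-κ) * x) ≤ cosh (√(-κ) * y) ↔ x ≤ y := by
    rw [cosh_le_cosh, abs_of_nonneg (by positivity), abs_of_nonneg (by positivity),
      mul_le_mul_iff_right₀ hc]
  set a := √(-κ) * dxy
  have ha : 0 < a := by positivity
  have hs₁ : 0 ≤ sinh ((1 - t) * a) := sinh_nonneg_iff.2 (mul_nonneg (by linarith [ht.2]) ha.le)
  have hs₂ : 0 ≤ sinh (t * a) := sinh_nonneg_iff.2 (mul_nonneg ht.1 ha.le)
  have hsum : sinh ((1 - t) * a) + sinh (t * a) ≤ sinh a := by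
    have hadd : sinh a =
        sinh ((1 - t) * a) * cosh (t * a) + cosh ((1 - t) * a) * sinh (t * a) := by
      rw [← sinh_add]; ring_nf
    nlinarith [one_le_cosh (t * a), one_le_cosh ((1 - t) * a)]
  have hr : 0 ≤ r := hb₁.trans hb₁r
  rw [← cosh_le hdzt hr]
  refine le_of_mul_le_mul_right ?_ (sinh_pos_iff.2 ha)
  calc cosh (√(-κ) * dzt) * sinh a
      ≤ sinh ((1 - t) * a) * cosh (√(-κ) * b₁) + sinh (t * a) * cosh (√(-κ) * b₂) := h.2.2 hκ
    _ ≤ sinh ((1 - t) * a) * cosh (√(-κ) * r) + sinh (t * a) * cosh (√(-κ) * r) := by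
      gcongr <;> rwa [cosh_le (by assumption) hr]
    _ ≤ cosh (√(-κ) * r) * sinh a := by nlinarith [cosh_pos (√(-κ) * r)]

lemma le_of_catIneq_of_pos {κ r b₁ b₂ dxy dzt t : ℝ} (hκ : 0 < κ) (ht : t ∈ Icc (0 : ℝ) 1)
    (hb₁ : 0 ≤ b₁) (hb₁r : b₁ ≤ r) (hb₂ : 0 ≤ b₂) (hb₂r : b₂ ≤ r) (hdxy : 0 < dxy)
    (hdxyr : dxy ≤ 2 * r) (hdzt : 0 ≤ dzt) (htri : dzt ≤ b₁ + t * dxy) (hrD : 2 * r < π / √κ)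
    (h : catIneq κ b₁ b₂ dxy dzt t) : dzt ≤ r := by
  have hs : 0 < √κ := Real.sqrt_pos.2 hκ
  have hsr : √κ * r < π / 2 := by rw [lt_div_iff₀ hs] at hrD; linarith
  set a := √κ * dxy
  have ha : 0 < a := by positivity
  have haπ : a < π := by nlinarith
  have hs₁ : 0 ≤ sin ((1 - t) * a) :=
    sin_nonneg_of_nonneg_of_le_pi (mul_nonneg (by linarith [ht.2]) ha.le) (by nlinarith [ht.1])
  have hs₂ : 0 ≤ sin (t * a) :=
    sin_nonneg_of_nonneg_of_le_pi (mul_nonneg ht.1 ha.le) (by nlinarith [ht.2])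
  have hsum : sin a ≤ sin ((1 - t) * a) + sin (t * a) := by
    nth_rw 1 [show a = (1 - t) * a + t * a by ring, sin_add]
    nlinarith [cos_le_one (t * a), cos_le_one ((1 - t) * a)]
  have cos_le {x : ℝ} (hx : 0 ≤ x) (hxr : x ≤ r) : cos (√κ * r) ≤ cos (√κ * x) :=
    cos_le_cos_of_nonneg_of_le_pi (by positivity) (by linarith [pi_pos]) (by gcongr)
  have hcos_r : 0 < cos (√κ * r) := cos_pos_of_mem_Ioo ⟨by nlinarith [pi_pos], hsr⟩
  have hcos : cos (√κ * r) ≤ cos (√κ * dzt) := by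
    refine le_of_mul_le_mul_right ?_ (sin_pos_of_pos_of_lt_pi ha haπ)
    calc cos (√κ * r) * sin a
        ≤ sin ((1 - t) * a) * cos (√κ * r) + sin (t * a) * cos (√κ * r) := by nlinarith
      _ ≤ sin ((1 - t) * a) * cos (√κ * b₁) + sin (t * a) * cos (√κ * b₂) := by
        gcongr <;> exact cos_le (by assumption) (by assumption)
      _ ≤ cos (√κ * dzt) * sin a := h.1 hκ
  -- `cos` is not monotone globally: the a priori bound `√κ * dzt < 3π/2` makes `cos > 0`
  -- force `√κ * dzt < π/2`
  have hdzt_lt : √κ * dzt < π / 2 := by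
    by_contra! hge
    have : √κ * dzt ≤ π + π / 2 := by nlinarith [ht.2]
    linarith [cos_nonpos_of_pi_div_two_le_of_le hge this]
  have hr : 0 ≤ r := hb₁.trans hb₁r
  have := (strictAntiOn_cos.le_iff_ge ⟨by positivity, by linarith [pi_pos]⟩
    ⟨by positivity, by linarith [pi_pos]⟩).1 hcos
  exact le_of_mul_le_mul_left this hs

lemma le_of_catIneq {κ r b₁ b₂ dxy dzt t : ℝ} (ht : t ∈ Icc (0 : ℝ) 1)
    (hb₁ : 0 ≤ b₁) (hb₁r : b₁ ≤ r) (hb₂ : 0 ≤ b₂) (hb₂r : b₂ ≤ r) (hdxy : 0 ≤ dxy)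
    (hdxyr : dxy ≤ 2 * r) (hdzt : 0 ≤ dzt) (htri : dzt ≤ b₁ + t * dxy)
    (hrD : 0 < κ → 2 * r < π / √κ) (h : catIneq κ b₁ b₂ dxy dzt t) : dzt ≤ r := by
  rcases hdxy.eq_or_lt with hdxy | hdxy
  · rw [← hdxy, mul_zero, add_zero] at htri
    exact htri.trans hb₁r
  rcases lt_trichotomy κ 0 with hκ | rfl | hκ
  · exact le_of_catIneq_of_neg hκ ht hb₁ hb₁r hb₂ hb₂r hdxy hdzt h
  · have h0 := h.2.1 rfl
    have hsq : dzt ^ 2 ≤ r ^ 2 := by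
      nlinarith [mul_le_mul_of_nonneg_left (pow_le_pow_left₀ hb₁ hb₁r 2) (sub_nonneg.2 ht.2),
        mul_le_mul_of_nonneg_left (pow_le_pow_left₀ hb₂ hb₂r 2) ht.1,
        mul_nonneg (mul_nonneg ht.1 (sub_nonneg.2 ht.2)) (sq_nonneg dxy)]
    exact (pow_le_pow_iff_left₀ hdzt (hb₁.trans hb₁r) two_ne_zero).1 hsq
  · exact le_of_catIneq_of_pos hκ ht hb₁ hb₁r hb₂ hb₂r hdxy hdxyr hdzt htri (hrD hκ) h

lemma IsGeodesic.dist_eq {X : Type*} [MetricSpace X] {γ : ℝ → X} (hγ : IsGeodesic γ) {s t : ℝ}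
    (hs : s ∈ Icc (0 : ℝ) 1) (ht : t ∈ Icc (0 : ℝ) 1) :
    dist (γ s) (γ t) = dist (γ 0) (γ 1) * |s - t| := by
  obtain ⟨L, -, hL⟩ := hγ
  rw [hL s hs t ht, hL 0 (left_mem_Icc.2 zero_le_one) 1 (right_mem_Icc.2 zero_le_one)]
  norm_num

lemma dist_le_two_mul_of_mem_closedBall {X : Type*} [PseudoMetricSpace X] {o x y : X} {r : ℝ}
    (hx : x ∈ Metric.closedBall o r) (hy : y ∈ Metric.closedBall o r) : dist x y ≤ 2 * r := by
  linarith [dist_triangle_right x y o, Metric.mem_closedBall.1 hx, Metric.mem_closedBall.1 hy]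

section CAT

variable {κ r : ℝ} {X : Type*} [MetricSpace X] {o : X}

lemma IsCAT.mem_closedBall_of_isGeodesic (hX : IsCAT κ X) (hrD : 0 < κ → 2 * r < π / √κ)
    {γ : ℝ → X} (hγ : IsGeodesic γ) (h0 : γ 0 ∈ Metric.closedBall o r)
    (h1 : γ 1 ∈ Metric.closedBall o r) {t : ℝ} (ht : t ∈ Icc (0 : ℝ) 1) :
    γ t ∈ Metric.closedBall o r := by
  have hxy := dist_le_two_mul_of_mem_closedBall h0 h1
  rw [Metric.mem_closedBall, dist_comm] at h0 h1 ⊢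
  have hcat := hX.2 (γ 0) (γ 1) o γ hγ rfl rfl
    (fun hκ => by linarith [hrD hκ, dist_comm (γ 1) o]) t ht
  have htri : dist o (γ t) ≤ dist o (γ 0) + t * dist (γ 0) (γ 1) := by
    have := hγ.dist_eq (left_mem_Icc.2 zero_le_one) ht
    rw [zero_sub, abs_neg, abs_of_nonneg ht.1] at this
    linarith [dist_triangle o (γ 0) (γ t)]
  exact le_of_catIneq ht dist_nonneg h0 dist_nonneg h1 dist_nonneg hxy dist_nonneg htri hrD hcat

lemma IsCAT.exists_isGeodesic_mem_closedBall (hX : IsCAT κ X) (hrD : 0 < κ → 2 * r < π / √κ)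
    {x y : X} (hx : x ∈ Metric.closedBall o r) (hy : y ∈ Metric.closedBall o r) :
    ∃ γ : ℝ → X, (IsGeodesic γ ∧ γ 0 = x ∧ γ 1 = y) ∧
      ∀ t ∈ Icc (0 : ℝ) 1, γ t ∈ Metric.closedBall o r := by
  obtain ⟨γ, hγ, rfl, rfl⟩ :=
    hX.1 x y fun hκ => (dist_le_two_mul_of_mem_closedBall hx hy).trans_lt (hrD hκ)
  exact ⟨γ, ⟨hγ, rfl, rfl⟩, fun t ht => hX.mem_closedBall_of_isGeodesic hrD hγ hx hy ht⟩

end CAT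

def IsLimitDist {Y I : Type*} [PseudoMetricSpace Y] (l : Filter I)
    (d : (I → Y) → (I → Y) → ℝ) : Prop :=
  ∀ f g : I → Y, Tendsto (fun i => dist (f i) (g i)) l (𝓝 (d f g))

namespace IsLimitDist

variable {Y I : Type*} [PseudoMetricSpace Y] {l : Filter I} [l.NeBot]
  {d : (I → Y) → (I → Y) → ℝ}

lemma nonneg (hd : IsLimitDist l d) (f g : I → Y) : 0 ≤ d f g :=
  ge_of_tendsto' (hd f g) fun _ => dist_nonneg

lemma le_of_forall (hd : IsLimitDist l d) {f g : I → Y} {C : ℝ}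
    (h : ∀ i, dist (f i) (g i) ≤ C) : d f g ≤ C :=
  le_of_tendsto' (hd f g) h

lemma self (hd : IsLimitDist l d) (f : I → Y) : d f f = 0 :=
  tendsto_nhds_unique (hd f f) (by simp)

lemma symm (hd : IsLimitDist l d) (f g : I → Y) : d f g = d g f :=
  tendsto_nhds_unique (hd f g) (by simpa only [dist_comm] using hd g f)

lemma triangle (hd : IsLimitDist l d) (f g h : I → Y) : d f h ≤ d f g + d g h :=
  le_of_tendsto_of_tendsto (hd f h) ((hd f g).add (hd g h))
    (Eventually.of_forall fun _ => dist_triangle _ _ _)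

lemma congr (hd : IsLimitDist l d) {a a' b b' : I → Y} (ha : d a a' = 0) (hb : d b b' = 0) :
    d a b = d a' b' := by
  have := hd.triangle a a' b
  have := hd.triangle a' b b'
  have := hd.triangle a' a b
  have := hd.triangle b b' a'
  linarith [hd.symm a a', hd.symm b b', hd.symm a' b, hd.symm b' a']

end IsLimitDist

section Ultralimit

variable {κ r : ℝ} {X : Type*} [MetricSpace X] {o : X} {I : Type*} {l : Filter I} [l.NeBot]
  {d : (I → Metric.closedBall o r) → (I → Metric.closedBall o r) → ℝ}

lemma IsCAT.catIneq_of_isLimitDist (hX : IsCAT κ X) (hd : IsLimitDist l d)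
    {x y z gt : I → Metric.closedBall o r} {g : I → ℝ → X}
    (hg : ∀ i, IsGeodesic (g i) ∧ g i 0 = x i ∧ g i 1 = y i)
    (hper : 0 < κ → d x y + d y z + d z x < 2 * (π / √κ)) {t : ℝ} (ht : t ∈ Icc (0 : ℝ) 1)
    (hgt : ∀ i, (gt i : X) = g i t) :
    catIneq κ (d z x) (d z y) (d x y) (d z gt) t := by
  have hper_ev : ∀ᶠ i in l, 0 < κ →
      dist (x i : X) (y i) + dist (y i : X) (z i) + dist (z i : X) (x i) < 2 * (π / √κ) := by
    by_cases hκ : 0 < κ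
    · filter_upwards [(((hd x y).add (hd y z)).add (hd z x)).eventually_lt_const (hper hκ)]
        with i hi _ using hi
    · exact Eventually.of_forall fun _ h => absurd h hκ
  have hlim := (hd z x).prodMk_nhds ((hd z y).prodMk_nhds ((hd x y).prodMk_nhds (hd z gt)))
  refine (isClosed_setOf_catIneq κ t).mem_of_tendsto (x := (d z x, d z y, d x y, d z gt)) hlim ?_
  filter_upwards [hper_ev] with i hi
  have := hX.2 (x i) (y i) (z i) (g i) (hg i).1 (hg i).2.1 (hg i).2.2 hi t ht
  rwa [← hgt i] at this

lemma IsCAT.isLimitDist_eq_zero (hX : IsCAT κ X) (hrD : 0 < κ → 2 * r < π / √κ)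
    (hd : IsLimitDist l d) {γ : ℝ → I → Metric.closedBall o r} {L : ℝ}
    (hγ : ∀ s ∈ Icc (0 : ℝ) 1, ∀ t ∈ Icc (0 : ℝ) 1, d (γ s) (γ t) = L * |s - t|)
    {g : I → ℝ → X} (hg : ∀ i, IsGeodesic (g i) ∧ g i 0 = γ 0 i ∧ g i 1 = γ 1 i)
    {t : ℝ} (ht : t ∈ Icc (0 : ℝ) 1) {gt : I → Metric.closedBall o r}
    (hgt : ∀ i, (gt i : X) = g i t) : d (γ t) gt = 0 := by
  have h0 : (0 : ℝ) ∈ Icc (0 : ℝ) 1 := left_mem_Icc.2 zero_le_one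
  have h1 : (1 : ℝ) ∈ Icc (0 : ℝ) 1 := right_mem_Icc.2 zero_le_one
  have h01 : d (γ 0) (γ 1) = L := by simpa using hγ 0 h0 1 h1
  have ht0 : d (γ t) (γ 0) = L * t := by simpa [abs_of_nonneg ht.1] using hγ t ht 0 h0
  have ht1 : d (γ t) (γ 1) = L * (1 - t) := by
    simpa [abs_of_nonpos (sub_nonpos.2 ht.2)] using hγ t ht 1 h1
  have hL : 0 ≤ L := h01 ▸ hd.nonneg _ _
  have hLr : L ≤ 2 * r :=
    h01 ▸ hd.le_of_forall fun i =>
      (dist_le_two_mul_of_mem_closedBall (γ 0 i).2 (γ 1 i).2 : dist (γ 0 i : X) (γ 1 i) ≤ 2 * r)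
  have h0gt : d (γ 0) gt = L * t := by
    refine tendsto_nhds_unique (hd _ _) ?_
    convert h01 ▸ (hd (γ 0) (γ 1)).mul_const t using 2 with i
    rw [Subtype.dist_eq, hgt i, ← (hg i).2.1, (hg i).1.dist_eq h0 ht, (hg i).2.1, (hg i).2.2,
      zero_sub, abs_neg, abs_of_nonneg ht.1]
    rfl
  have hdL : d (γ t) gt ≤ 2 * L := by
    nlinarith [hd.triangle (γ t) (γ 0) gt, ht.2]
  have hcat := hX.catIneq_of_isLimitDist hd (z := γ t) hg (fun hκ => ?_) ht hgt
  · rw [ht0, ht1, h01] at hcat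
    exact eq_zero_of_catIneq_degenerate (hd.nonneg _ _) hdL (fun hκ => by linarith [hrD hκ]) hcat
  · rw [h01, hd.symm, ht1, ht0]
    linarith [hrD hκ]

lemma IsCAT.exists_geodesics_of_isLimitDist (hX : IsCAT κ X) (hrD : 0 < κ → 2 * r < π / √κ)
    (hd : IsLimitDist l d) {γ : ℝ → I → Metric.closedBall o r} {L : ℝ}
    (hγ : ∀ s ∈ Icc (0 : ℝ) 1, ∀ t ∈ Icc (0 : ℝ) 1, d (γ s) (γ t) = L * |s - t|) :
    ∃ g : I → ℝ → X,
      (∀ i, (IsGeodesic (g i) ∧ g i 0 = γ 0 i ∧ g i 1 = γ 1 i) ∧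
        ∀ t ∈ Icc (0 : ℝ) 1, g i t ∈ Metric.closedBall o r) ∧
      ∀ t ∈ Icc (0 : ℝ) 1, ∃ gt : I → Metric.closedBall o r,
        (∀ i, (gt i : X) = g i t) ∧ d (γ t) gt = 0 := by
  choose g hg hmem using fun i => hX.exists_isGeodesic_mem_closedBall hrD (γ 0 i).2 (γ 1 i).2
  exact ⟨g, fun i => ⟨hg i, hmem i⟩, fun t ht => ⟨fun i => ⟨g i t, hmem i t ht⟩, fun _ => rfl,
    hX.isLimitDist_eq_zero hrD hd hγ hg ht fun _ => rfl⟩⟩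

lemma IsCAT.catIneq_of_isLimitDist_of_geodesic (hX : IsCAT κ X)
    (hrD : 0 < κ → 2 * r < π / √κ) (hd : IsLimitDist l d) {x y z : I → Metric.closedBall o r}
    {γ : ℝ → I → Metric.closedBall o r} {L : ℝ}
    (hγ : ∀ s ∈ Icc (0 : ℝ) 1, ∀ t ∈ Icc (0 : ℝ) 1, d (γ s) (γ t) = L * |s - t|)
    (hx : d (γ 0) x = 0) (hy : d (γ 1) y = 0)
    (hper : 0 < κ → d x y + d y z + d z x < 2 * (π / √κ)) {t : ℝ} (ht : t ∈ Icc (0 : ℝ) 1) :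
    catIneq κ (d z x) (d z y) (d x y) (d z (γ t)) t := by
  obtain ⟨g, hg, hlim⟩ := hX.exists_geodesics_of_isLimitDist hrD hd hγ
  obtain ⟨gt, hgt, hγgt⟩ := hlim t ht
  have hz := hd.self z
  rw [← hd.congr hz hx, ← hd.congr hz hy, ← hd.congr hx hy, hd.congr hz hγgt]
  refine hX.catIneq_of_isLimitDist hd (fun i => (hg i).1) (fun hκ => ?_) ht hgt
  rw [hd.congr hx hy, hd.congr hy hz, hd.congr hz hx]
  exact hper hκ

end Ultralimit

theorem ultralimit_CAT_general
    (κ ε r : ℝ) (hε : ε ∈ Set.Ioo (0 : ℝ) 1) (hr : 0 ≤ r)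
    (hrD : 0 < κ → r ≤ (1 - ε) * (π / Real.sqrt κ) / 2)
    {X : Type*} [MetricSpace X] (hX : IsCAT κ X) (o : X)
    {I : Type*} (ω : Ultrafilter I)
    (dω : (I → Metric.closedBall o r) → (I → Metric.closedBall o r) → ℝ)
    (hdω : ∀ f g : I → Metric.closedBall o r,
      Filter.Tendsto (fun i => dist (f i : X) (g i : X)) ω (nhds (dω f g))) :
    (∀ f : I → Metric.closedBall o r,
      dω (fun _ => ⟨o, Metric.mem_closedBall_self hr⟩) f ≤ r) ∧
    (∀ (x y z : I → Metric.closedBall o r) (γ : ℝ → (I → Metric.closedBall o r)),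
      (∃ L : ℝ, 0 ≤ L ∧ ∀ s ∈ Set.Icc (0 : ℝ) 1, ∀ t ∈ Set.Icc (0 : ℝ) 1,
        dω (γ s) (γ t) = L * |s - t|) →
      dω (γ 0) x = 0 → dω (γ 1) y = 0 →
      (0 < κ → dω x y + dω y z + dω z x < 2 * (π / Real.sqrt κ)) →
      ∀ t ∈ Set.Icc (0 : ℝ) 1,
        catIneq κ (dω z x) (dω z y) (dω x y) (dω z (γ t)) t) ∧
    (∀ γ : ℝ → (I → Metric.closedBall o r),
      (∃ L : ℝ, 0 ≤ L ∧ ∀ s ∈ Set.Icc (0 : ℝ) 1, ∀ t ∈ Set.Icc (0 : ℝ) 1,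
        dω (γ s) (γ t) = L * |s - t|) →
      ∃ g : I → ℝ → X,
        (∀ i, IsGeodesic (g i) ∧ ∀ t ∈ Set.Icc (0 : ℝ) 1, g i t ∈ Metric.closedBall o r) ∧
        ∀ t ∈ Set.Icc (0 : ℝ) 1, ∃ gt : I → Metric.closedBall o r,
          (∀ i, (gt i : X) = g i t) ∧ dω (γ t) gt = 0) := by
  have hrD' : 0 < κ → 2 * r < π / √κ := fun hκ => by
    nlinarith [hrD hκ, hε.1, div_pos pi_pos (Real.sqrt_pos.2 hκ)]
  have hd : IsLimitDist (ω : Filter I) dω := hdω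
  refine ⟨fun f => hd.le_of_forall fun i => (dist_comm _ _).trans_le (f i).2,
    fun x y z γ ⟨L, _, hγ⟩ => hX.catIneq_of_isLimitDist_of_geodesic hrD' hd hγ,
    fun γ ⟨L, _, hγ⟩ => ?_⟩
  obtain ⟨g, hg, hlim⟩ := hX.exists_geodesics_of_isLimitDist hrD' hd hγ
  exact ⟨g, fun i => ⟨(hg i).1.1, (hg i).2⟩, hlim⟩

/-- Ultralimits of a closed ball of radius `r ≤ (1-ε)·D_κ/2` in a CAT(κ) space:
if `dω` is the ultralimit pseudodistance on `I → B̄_r(o)` with respect to a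
non-principal ultrafilter `ω`, then the ultralimit has radius at most `r` (about
the constant point `o`), satisfies the CAT(κ) one-point comparison inequality
along all of its geodesics, and every geodesic of the ultralimit is a limit of
geodesics of the ball. -/
theorem ultralimit_CAT
    (κ ε r : ℝ) (hε : ε ∈ Set.Ioo (0 : ℝ) 1) (hr : 0 ≤ r)
    (hrD : 0 < κ → r ≤ (1 - ε) * (π / Real.sqrt κ) / 2)
    {X : Type*} [MetricSpace X] (hX : IsCAT κ X) (o : X)
    {I : Type*} (ω : Ultrafilter I) (hω : ∀ S : Set I, S.Finite → S ∉ ω)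
    (dω : (I → Metric.closedBall o r) → (I → Metric.closedBall o r) → ℝ)
    (hdω : ∀ f g : I → Metric.closedBall o r,
      Filter.Tendsto (fun i => dist (f i : X) (g i : X)) ω (nhds (dω f g))) :
    (∀ f : I → Metric.closedBall o r,
      dω (fun _ => ⟨o, Metric.mem_closedBall_self hr⟩) f ≤ r) ∧
    (∀ (x y z : I → Metric.closedBall o r) (γ : ℝ → (I → Metric.closedBall o r)),
      (∃ L : ℝ, 0 ≤ L ∧ ∀ s ∈ Set.Icc (0 : ℝ) 1, ∀ t ∈ Set.Icc (0 : ℝ) 1,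
        dω (γ s) (γ t) = L * |s - t|) →
      dω (γ 0) x = 0 → dω (γ 1) y = 0 →
      (0 < κ → dω x y + dω y z + dω z x < 2 * (π / Real.sqrt κ)) →
      ∀ t ∈ Set.Icc (0 : ℝ) 1,
        catIneq κ (dω z x) (dω z y) (dω x y) (dω z (γ t)) t) ∧
    (∀ γ : ℝ → (I → Metric.closedBall o r),
      (∃ L : ℝ, 0 ≤ L ∧ ∀ s ∈ Set.Icc (0 : ℝ) 1, ∀ t ∈ Set.Icc (0 : ℝ) 1,
        dω (γ s) (γ t) = L * |s - t|) →
      ∃ g : I → ℝ → X,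
        (∀ i, IsGeodesic (g i) ∧ ∀ t ∈ Set.Icc (0 : ℝ) 1, g i t ∈ Metric.closedBall o r) ∧
        ∀ t ∈ Set.Icc (0 : ℝ) 1, ∃ gt : I → Metric.closedBall o r,
          (∀ i, (gt i : X) = g i t) ∧ dω (γ t) gt = 0) :=
  ultralimit_CAT_general κ ε r hε hr hrD hX o ω dω hdω
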